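/- arXiv:0801.1617 — 5 statements merged into one kernel-verified Lean document; each statement's English description precedes it below -/
import Mathlib

section
/- Let Z:[0,z]→ℝ be non-increasing and concave, and let k be a natural number with 2π(k+1) ≤ z. Then ∫_{2πk}^{2π(k+1)} Z(t)cos(t) dt ≤ 0. -/
/-!
After the shift t = 2πk + s, fold [0, 2π] onto [0, π/2] through s ↦ π - s, π + s, 2π - s. Since
cos is odd about π/2 and even about π, the integral becomes
-∫₀^{π/2} (Z(π - s) + Z(π + s) - Z(s) - Z(2π - s)) cos s, where Z stands for Z(2πk + ·).
The bracket is nonnegative by concavity: π ± s lie between s and 2π - s and have the same sum.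
-/

open Real Set intervalIntegral MeasureTheory

theorem ConcaveOn.add_le_add_of_le_of_add_eq {s : Set ℝ} {f : ℝ → ℝ} (hf : ConcaveOn ℝ s f)
    {x u v y : ℝ} (hx : x ∈ s) (hy : y ∈ s) (hxu : x ≤ u) (huv : u ≤ v) (hvy : v ≤ y)
    (hsum : x + y = u + v) : f x + f y ≤ f u + f v := by
  rcases (hxu.trans (huv.trans hvy)).eq_or_lt with hxy | hxy
  · obtain rfl : u = x := by linarith
    obtain rfl : v = u := by linarith
    rw [hxy]
  have hyx : 0 < y - x := sub_pos.2 hxy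
  set θ := (y - u) / (y - x)
  have hθ : 0 ≤ θ := div_nonneg (by linarith) hyx.le
  have hθ' : 0 ≤ 1 - θ := by rw [sub_nonneg, div_le_one hyx]; linarith
  have hu : θ • x + (1 - θ) • y = u := by simp only [θ, smul_eq_mul]; field_simp; ring
  have hv : (1 - θ) • x + θ • y = v := by
    rw [show v = x + y - u by linarith]; simp only [θ, smul_eq_mul]; field_simp; ring
  have hfu := hf.2 hx hy hθ hθ' (add_sub_cancel θ 1)
  have hfv := hf.2 hx hy hθ' hθ (sub_add_cancel 1 θ)
  rw [hu] at hfu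
  rw [hv] at hfv
  simp only [smul_eq_mul] at hfu hfv
  linarith

section Fold

variable {E : Type*} [NormedAddCommGroup E] {f : ℝ → E} {a b m : ℝ}

theorem Set.mem_uIcc_of_add_eq_two_mul (hm : a + b = 2 * m) : m ∈ uIcc a b := by
  rcases le_total a b with h | h
  · rw [uIcc_of_le h]; constructor <;> linarith
  · rw [uIcc_of_ge h]; constructor <;> linarith

theorem IntervalIntegrable.comp_sub_of_add_eq (hf : IntervalIntegrable f volume a b)
    (hm : a + b = 2 * m) : IntervalIntegrable (fun x ↦ f (a + b - x)) volume a m := by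
  have := (hf.mono_set (uIcc_subset_uIcc_right (mem_uIcc_of_add_eq_two_mul hm))).comp_sub_left
    (a + b)
  simpa [show a + b - m = m by linarith] using this.symm

theorem IntervalIntegrable.add_comp_sub_of_add_eq (hf : IntervalIntegrable f volume a b)
    (hm : a + b = 2 * m) : IntervalIntegrable (fun x ↦ f x + f (a + b - x)) volume a m :=
  (hf.mono_set (uIcc_subset_uIcc_left (mem_uIcc_of_add_eq_two_mul hm))).add
    (hf.comp_sub_of_add_eq hm)

theorem intervalIntegral.integral_eq_integral_add_comp_sub [NormedSpace ℝ E]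
    (hf : IntervalIntegrable f volume a b) (hm : a + b = 2 * m) :
    ∫ x in a..b, f x = ∫ x in a..m, (f x + f (a + b - x)) := by
  have hmem := mem_uIcc_of_add_eq_two_mul hm
  have hleft := hf.mono_set (uIcc_subset_uIcc_left hmem)
  rw [integral_add hleft (hf.comp_sub_of_add_eq hm), integral_comp_sub_left,
    show a + b - m = m by linarith, add_sub_cancel_left,
    integral_add_adjacent_intervals hleft (hf.mono_set (uIcc_subset_uIcc_right hmem))]

end Fold

theorem integral_mul_cos_eq_neg_integral {g : ℝ → ℝ}
    (hg : IntervalIntegrable g volume 0 (2 * π)) :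
    ∫ u in 0..2 * π, g u * cos u =
      -∫ s in 0..π / 2, (g (π - s) + g (π + s) - g s - g (2 * π - s)) * cos s := by
  have hgc := hg.mul_continuousOn continuous_cos.continuousOn
  rw [integral_eq_integral_add_comp_sub hgc (m := π) (by ring),
    integral_eq_integral_add_comp_sub (hgc.add_comp_sub_of_add_eq (by ring)) (m := π / 2)
      (by ring),
    ← intervalIntegral.integral_neg]
  refine integral_congr fun s _ ↦ ?_
  rw [zero_add, zero_add, show 2 * π - (π - s) = π + s by ring, cos_pi_sub, cos_two_pi_sub,
    add_comm π s, cos_add_pi]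
  ring

theorem integral_mul_cos_eq_integral_comp_add (F : ℝ → ℝ) (k : ℕ) :
    ∫ t in (2 * π * k)..(2 * π * (k + 1)), F t * cos t =
      ∫ u in 0..2 * π, F (2 * π * k + u) * cos u := by
  have hcos (u : ℝ) : cos (2 * π * k + u) = cos u := by
    rw [add_comm, show 2 * π * (k : ℝ) = k * (2 * π) by ring, cos_add_nat_mul_two_pi]
  have hshift := integral_comp_add_left (fun t ↦ F t * cos t) (2 * π * k) (a := 0) (b := 2 * π)
  rw [add_zero, show 2 * π * k + 2 * π = 2 * π * (k + 1) by ring] at hshift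
  rw [← hshift]
  exact integral_congr fun u _ ↦ by simp only [hcos]

theorem stmt_0 (z : ℝ) (Z : ℝ → ℝ) (k : ℕ)
    (hanti : AntitoneOn Z (Set.Icc 0 z))
    (hconc : ConcaveOn ℝ (Set.Icc 0 z) Z)
    (hz : 2 * π * (k + 1) ≤ z) :
    ∫ t in (2 * π * k)..(2 * π * (k + 1)), Z t * Real.cos t ≤ 0 := by
  set a := 2 * π * (k : ℝ)
  have hmem : ∀ u ∈ Icc 0 (2 * π), a + u ∈ Icc 0 z := fun u hu ↦
    ⟨add_nonneg (by positivity) hu.1, by linarith [hu.2]⟩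
  have hint : IntervalIntegrable (fun u ↦ Z (a + u)) volume 0 (2 * π) := by
    refine AntitoneOn.intervalIntegrable fun x hx y hy hxy ↦ ?_
    rw [uIcc_of_le (by positivity)] at hx hy
    exact hanti (hmem x hx) (hmem y hy) (by linarith)
  rw [integral_mul_cos_eq_integral_comp_add, integral_mul_cos_eq_neg_integral hint, neg_nonpos]
  refine integral_nonneg (by positivity) fun s ⟨hs₀, hs₁⟩ ↦
    mul_nonneg ?_ (cos_nonneg_of_mem_Icc ⟨by linarith, hs₁⟩)
  have := hconc.add_le_add_of_le_of_add_eq (hmem s ⟨hs₀, by linarith⟩)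
    (hmem (2 * π - s) ⟨by linarith, by linarith⟩) (u := a + (π - s)) (v := a + (π + s))
    (by linarith) (by linarith) (by linarith) (by ring)
  linarith
end

section
/- Let Z:[0,z]→ℝ be non-increasing and concave, and let k be a natural number with 2π(k+3/2) ≤ z. Then ∫_{2π(k+1/2)}^{2π(k+3/2)} Z(t)cos(t) dt ≥ 0. -/
/-!
With `m = 2π(k+1)` the interval is `[m - π, m + π]` and `cos (m ± u) = cos u`. Folding at `m` turns
the integral into `∫₀^π h u * cos u` with `h u = Z (m - u) + Z (m + u)`, and concavity makes `h`
non-increasing. Folding again at `π/2` pairs each `u ∈ [π/2, π]`, where `cos u ≤ 0`, with `π - u`,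
and `h (π - u) ≥ h u` makes every pair contribute a non-negative amount.
-/

open Real Set intervalIntegral MeasureTheory

theorem intervalIntegral.integral_eq_integral_add_reflect {E : Type*} [NormedAddCommGroup E]
    [NormedSpace ℝ E] {f : ℝ → E} {a b : ℝ} (hf : IntervalIntegrable f volume a b) :
    ∫ x in a..b, f x = ∫ x in (a + b) / 2..b, (f x + f (a + b - x)) := by
  have hmid : (a + b) / 2 ∈ uIcc a b := by
    rcases le_total a b with h | h
    · exact Icc_subset_uIcc ⟨by linarith, by linarith⟩
    · exact Icc_subset_uIcc' ⟨by linarith, by linarith⟩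
  have hupper : uIcc ((a + b) / 2) b ⊆ uIcc a b := uIcc_subset_uIcc hmid right_mem_uIcc
  have hreflect : IntervalIntegrable (fun x ↦ f (a + b - x)) volume ((a + b) / 2) b := by
    refine (hf.comp_sub_left (a + b)).mono_set ?_
    rwa [add_sub_cancel_left, add_sub_cancel_right, uIcc_comm b a]
  rw [integral_add (hf.mono_set hupper) hreflect, integral_comp_sub_left, add_sub_cancel_right,
    show a + b - (a + b) / 2 = (a + b) / 2 by ring, add_comm,
    integral_add_adjacent_intervals (hf.mono_set (uIcc_subset_uIcc left_mem_uIcc hmid))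
      (hf.mono_set hupper)]

theorem ConcaveOn.antitoneOn_add_comp_sub_add {Z : ℝ → ℝ} {m r : ℝ}
    (hZ : ConcaveOn ℝ (Icc (m - r) (m + r)) Z) :
    AntitoneOn (fun u ↦ Z (m - u) + Z (m + u)) (Icc 0 r) := by
  rintro u ⟨hu, -⟩ v ⟨-, hvr⟩ huv
  rcases huv.eq_or_lt with rfl | huv
  · rfl
  have hv : 0 < v := hu.trans_lt huv
  have hlo : m - v ∈ Icc (m - r) (m + r) := ⟨by linarith, by linarith⟩
  have hhi : m + v ∈ Icc (m - r) (m + r) := ⟨by linarith, by linarith⟩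
  set a := (v + u) / (2 * v)
  set b := (v - u) / (2 * v)
  have ha : 0 ≤ a := by positivity
  have hb : 0 ≤ b := div_nonneg (by linarith) (by positivity)
  have hab : a + b = 1 := by simp only [a, b]; field_simp; ring
  have hminus := hZ.2 hlo hhi ha hb hab
  have hplus := hZ.2 hlo hhi hb ha (by linarith)
  have e1 : a • (m - v) + b • (m + v) = m - u := by simp only [smul_eq_mul, a, b]; field_simp; ring
  have e2 : b • (m - v) + a • (m + v) = m + u := by simp only [smul_eq_mul, a, b]; field_simp; ring
  rw [e1, smul_eq_mul, smul_eq_mul] at hminus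
  rw [e2, smul_eq_mul, smul_eq_mul] at hplus
  linear_combination hminus + hplus - (Z (m - v) + Z (m + v)) * hab

theorem AntitoneOn.integral_mul_cos_nonneg {h : ℝ → ℝ} (hh : AntitoneOn h (Icc 0 π)) :
    0 ≤ ∫ u in 0..π, h u * cos u := by
  have hint : IntervalIntegrable (fun u ↦ h u * cos u) volume 0 π :=
    (AntitoneOn.intervalIntegrable (by rwa [uIcc_of_le pi_pos.le])).mul_continuousOn
      continuous_cos.continuousOn
  rw [integral_eq_integral_add_reflect hint, zero_add]
  refine integral_nonneg (by linarith [pi_pos]) fun u ⟨hu, huπ⟩ ↦ ?_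
  have hreflect : h u ≤ h (π - u) :=
    hh ⟨by linarith, by linarith⟩ ⟨by linarith [pi_pos], huπ⟩ (by linarith)
  have hcos : cos u ≤ 0 := cos_nonpos_of_pi_div_two_le_of_le hu (by linarith)
  rw [cos_pi_sub]
  nlinarith

theorem ConcaveOn.integral_mul_cos_nonneg {Z : ℝ → ℝ} (n : ℤ)
    (hZ : ConcaveOn ℝ (Icc (n * (2 * π) - π) (n * (2 * π) + π)) Z)
    (hint : IntervalIntegrable Z volume (n * (2 * π) - π) (n * (2 * π) + π)) :
    0 ≤ ∫ t in (n * (2 * π) - π)..(n * (2 * π) + π), Z t * cos t := by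
  set m : ℝ := n * (2 * π)
  rw [integral_eq_integral_add_reflect (hint.mul_continuousOn continuous_cos.continuousOn),
    show (m - π + (m + π)) / 2 = m + 0 by ring, ← integral_comp_add_left]
  refine hZ.antitoneOn_add_comp_sub_add.integral_mul_cos_nonneg.trans_eq
    (integral_congr fun u _ ↦ ?_)
  have hcos_add : cos (m + u) = cos u := by rw [add_comm]; exact cos_add_int_mul_two_pi u n
  have hcos_sub : cos (m - u) = cos u := cos_int_mul_two_pi_sub u n
  rw [show m - π + (m + π) - (m + u) = m - u by ring, hcos_add, hcos_sub]
  ring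

theorem stmt_1 (z : ℝ) (Z : ℝ → ℝ) (k : ℕ)
    (hanti : AntitoneOn Z (Set.Icc 0 z))
    (hconc : ConcaveOn ℝ (Set.Icc 0 z) Z)
    (hz : 2 * π * (k + 3/2) ≤ z) :
    0 ≤ ∫ t in (2 * π * (k + 1/2))..(2 * π * (k + 3/2)), Z t * Real.cos t := by
  have hlo : 2 * π * (k + 1/2) = ((k + 1 : ℤ) : ℝ) * (2 * π) - π := by push_cast; ring
  have hhi : 2 * π * (k + 3/2) = ((k + 1 : ℤ) : ℝ) * (2 * π) + π := by push_cast; ring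
  have hle : 2 * π * (k + 1/2) ≤ 2 * π * (k + 3/2) := by linarith [pi_pos]
  have hsub : Icc (2 * π * (k + 1/2)) (2 * π * (k + 3/2)) ⊆ Icc 0 z :=
    Icc_subset_Icc (by positivity) hz
  have hint : IntervalIntegrable Z volume _ _ :=
    (hanti.mono ((uIcc_of_le hle).trans_subset hsub)).intervalIntegrable
  rw [hlo, hhi] at hsub hint ⊢
  exact (hconc.subset hsub (convex_Icc _ _)).integral_mul_cos_nonneg _ hint
end

section
/- Let Z:[0,z]→ℝ be non-increasing, and let k be a natural number with 2π(k+1/2) ≤ z. Then ∫_{2πk}^{2π(k+1/2)} Z(t)cos(t) dt ≥ 0. -/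
/-!
On `[2πk, 2πk + π]` the cosine is nonnegative up to the midpoint `m = 2πk + π/2` and nonpositive
after it, so `(Z t - Z m) cos t ≥ 0` there when `Z` is non-increasing. Integrating,
`∫ Z cos ≥ Z m ∫ cos = 0`.
-/

open Real Set intervalIntegral

theorem AntitoneOn.mul_integral_le_integral_mul_of_sign_change {Z g : ℝ → ℝ} {a m b : ℝ}
    (hab : a ≤ b) (hZ : AntitoneOn Z (Icc a b)) (hg : ContinuousOn g (Icc a b))
    (hm : m ∈ Icc a b) (hg_nonneg : ∀ t ∈ Icc a m, 0 ≤ g t) (hg_nonpos : ∀ t ∈ Icc m b, g t ≤ 0) :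
    Z m * ∫ t in a..b, g t ≤ ∫ t in a..b, Z t * g t := by
  rw [← integral_const_mul]
  have hZ_int : IntervalIntegrable Z MeasureTheory.volume a b :=
    AntitoneOn.intervalIntegrable (by rwa [uIcc_of_le hab])
  refine integral_mono_on hab ((hg.mono (uIcc_of_le hab).le).intervalIntegrable.const_mul _)
    (hZ_int.mul_continuousOn (by rwa [uIcc_of_le hab])) fun t ht => ?_
  rcases le_total t m with htm | hmt
  · exact mul_le_mul_of_nonneg_right (hZ ht hm htm) (hg_nonneg t ⟨ht.1, htm⟩)
  · exact mul_le_mul_of_nonpos_right (hZ hm ht hmt) (hg_nonpos t ⟨hmt, ht.2⟩)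

theorem Real.integral_cos_nat_mul_two_pi_to_add_pi (k : ℕ) :
    ∫ t in (2 * π * k)..(2 * π * k + π), cos t = 0 := by
  have hsin : sin (2 * π * k) = 0 := by
    simpa [mul_comm, mul_left_comm] using sin_nat_mul_pi (2 * k)
  rw [integral_cos, sin_add_pi, hsin]
  ring

theorem Real.cos_nonneg_of_mem_Icc_nat_mul_two_pi (k : ℕ) {t : ℝ}
    (ht : t ∈ Icc (2 * π * k) (2 * π * k + π / 2)) : 0 ≤ cos t := by
  rw [← cos_sub_nat_mul_two_pi t k]
  exact cos_nonneg_of_mem_Icc ⟨by linarith [ht.1, pi_pos], by linarith [ht.2]⟩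

theorem Real.cos_nonpos_of_mem_Icc_nat_mul_two_pi (k : ℕ) {t : ℝ}
    (ht : t ∈ Icc (2 * π * k + π / 2) (2 * π * k + π)) : cos t ≤ 0 := by
  rw [← cos_sub_nat_mul_two_pi t k]
  exact cos_nonpos_of_pi_div_two_le_of_le (by linarith [ht.1]) (by linarith [ht.2, pi_pos])

theorem stmt_2 (z : ℝ) (Z : ℝ → ℝ) (k : ℕ)
    (hanti : AntitoneOn Z (Set.Icc 0 z))
    (hz : 2 * π * (k + 1/2) ≤ z) :
    0 ≤ ∫ t in (2 * π * k)..(2 * π * (k + 1/2)), Z t * Real.cos t := by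
  have hb : 2 * π * (k + 1/2) = 2 * π * k + π := by ring
  rw [hb] at hz ⊢
  have hπ := pi_pos
  have h0 : 0 ≤ 2 * π * k := by positivity
  have key := (hanti.mono (Icc_subset_Icc h0 hz)).mul_integral_le_integral_mul_of_sign_change
    (by linarith) continuous_cos.continuousOn (m := 2 * π * k + π / 2)
    ⟨by linarith, by linarith⟩ (fun _ => cos_nonneg_of_mem_Icc_nat_mul_two_pi k)
    (fun _ => cos_nonpos_of_mem_Icc_nat_mul_two_pi k)
  rwa [integral_cos_nat_mul_two_pi_to_add_pi, mul_zero] at key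
end

section
/- Let Ω ⊂ ℝ^d be a bounded open set and ξ₀ ∈ ℝ^d a nonzero vector with ∫_Ω e^{i ξ₀·x} dx = 0. Then the functions e^{i ξ₀·x/2} and e^{-i ξ₀·x/2} are linearly independent in L²(Ω), and every function φ = a e^{i ξ₀·x/2} + b e^{-i ξ₀·x/2} satisfies ‖∇φ‖²_{L²(Ω)} = (|ξ₀|²/4) ‖φ‖²_{L²(Ω)}. -/
open Real MeasureTheory Complex
open scoped RealInnerProductSpace ComplexConjugate

/-!
The plane waves `e^{±i ξ₀·x/2}` have modulus one, and
`e^{i ξ₀·x/2} · conj (e^{-i ξ₀·x/2}) = e^{i ξ₀·x}` integrates to zero over `Ω`,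
so they are orthogonal in `L²(Ω)` and `∫_Ω |a e^{i ξ₀·x/2} + b e^{-i ξ₀·x/2}|² = |Ω| (|a|² + |b|²)`.
If the combination vanishes on `Ω` this forces `a = b = 0`, as `|Ω| > 0`.
Since `∇φ = (i ξ₀ / 2) (a e^{i ξ₀·x/2} - b e^{-i ξ₀·x/2})` pointwise, the same identity with `-b`
in place of `b` gives `‖∇φ‖² = (|ξ₀|² / 4) |Ω| (|a|² + |b|²) = (|ξ₀|² / 4) ‖φ‖²`.
-/

section Orthogonality

variable {X : Type*} [MeasurableSpace X] {μ : Measure X} {s : Set X} {u v : X → ℂ}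

theorem setIntegral_norm_mul_add_mul_sq_of_orthogonal (hs : μ s ≠ ⊤)
    (hu_meas : AEStronglyMeasurable u (μ.restrict s))
    (hv_meas : AEStronglyMeasurable v (μ.restrict s))
    (hu : ∀ x, ‖u x‖ = 1) (hv : ∀ x, ‖v x‖ = 1)
    (horth : ∫ x in s, u x * conj (v x) ∂μ = 0) (a b : ℂ) :
    ∫ x in s, ‖a * u x + b * v x‖ ^ 2 ∂μ = μ.real s * (‖a‖ ^ 2 + ‖b‖ ^ 2) := by
  have : Fact (μ s < ⊤) := ⟨hs.lt_top⟩
  set c : X → ℂ := fun x => a * conj b * (u x * conj (v x))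
  have hc : Integrable c (μ.restrict s) :=
    (Integrable.of_bound (C := 1) (hu_meas.mul hv_meas.star)
      (.of_forall fun x => by simp [hu, hv])).const_mul _
  have hc_re : Integrable (fun x => (c x).re) (μ.restrict s) := hc.re
  have hpoint : ∀ x, ‖a * u x + b * v x‖ ^ 2 = (‖a‖ ^ 2 + ‖b‖ ^ 2) + 2 * (c x).re := by
    intro x
    simp only [Complex.sq_norm, c]
    rw [Complex.normSq_add]
    simp only [← Complex.sq_norm, hu, hv, map_mul]
    ring_nf
  have hcross : ∫ x in s, (c x).re ∂μ = 0 := by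
    refine (integral_re hc).trans ?_
    simp only [c, integral_const_mul, horth, mul_zero]
    rfl
  simp_rw [hpoint]
  rw [integral_add (integrable_const _) (hc_re.const_mul 2), integral_const_mul, hcross]
  simp

theorem eq_zero_of_forall_mem_mul_add_mul_eq_zero (hs : μ s ≠ ⊤) (hs₀ : μ s ≠ 0)
    (hu_meas : AEStronglyMeasurable u (μ.restrict s))
    (hv_meas : AEStronglyMeasurable v (μ.restrict s))
    (hu : ∀ x, ‖u x‖ = 1) (hv : ∀ x, ‖v x‖ = 1)
    (horth : ∫ x in s, u x * conj (v x) ∂μ = 0) {a b : ℂ}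
    (hab : ∀ x ∈ s, a * u x + b * v x = 0) : a = 0 ∧ b = 0 := by
  have hzero : μ.real s * (‖a‖ ^ 2 + ‖b‖ ^ 2) = 0 := by
    rw [← setIntegral_norm_mul_add_mul_sq_of_orthogonal hs hu_meas hv_meas hu hv horth]
    exact setIntegral_eq_zero_of_forall_eq_zero fun x hx => by simp [hab x hx]
  have hreal : μ.real s ≠ 0 := by simp [measureReal_def, ENNReal.toReal_eq_zero_iff, hs, hs₀]
  simpa using (add_eq_zero_iff_of_nonneg (sq_nonneg ‖a‖) (sq_nonneg ‖b‖)).mp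
    ((mul_eq_zero.mp hzero).resolve_left hreal)

end Orthogonality

theorem EuclideanSpace.norm_of_forall_apply_eq_ofReal_mul {ι : Type*} [Fintype ι]
    {w : EuclideanSpace ℂ ι} {ξ : EuclideanSpace ℝ ι} {z : ℂ} (h : ∀ j, w j = ξ j * z) :
    ‖w‖ = ‖ξ‖ * ‖z‖ := by
  rw [← sq_eq_sq₀ (norm_nonneg _) (by positivity), mul_pow, EuclideanSpace.norm_sq_eq,
    EuclideanSpace.norm_sq_eq, Finset.sum_mul]
  simp [h, mul_pow]

theorem Complex.exp_I_mul_half_mul_conj_exp_neg (t : ℝ) :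
    exp (I * (t / 2)) * conj (exp (-(I * (t / 2)))) = exp (I * t) := by
  rw [← exp_conj, ← exp_add]
  congr 1
  simp only [map_neg, map_mul, map_div₀, conj_I, conj_ofReal, map_ofNat]
  ring

theorem stmt_6_general (d : ℕ) (Ω : Set (EuclideanSpace ℝ (Fin d)))
    (hbdd : Bornology.IsBounded Ω)
    (hpos : 0 < volume Ω)
    (ξ₀ : EuclideanSpace ℝ (Fin d))
    (ep em : EuclideanSpace ℝ (Fin d) → ℂ)
    (hep : ∀ x, ep x = Complex.exp (Complex.I * ((⟪ξ₀, x⟫ : ℝ) / 2)))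
    (hem : ∀ x, em x = Complex.exp (-(Complex.I * ((⟪ξ₀, x⟫ : ℝ) / 2))))
    (hzero : ∫ x in Ω, Complex.exp (Complex.I * (⟪ξ₀, x⟫ : ℝ)) = 0) :
    (∀ a b : ℂ, (∀ x ∈ Ω, a * ep x + b * em x = 0) → a = 0 ∧ b = 0) ∧
      (∀ a b : ℂ, ∀ φ : EuclideanSpace ℝ (Fin d) → ℂ,
        (∀ x, φ x = a * ep x + b * em x) →
        ∀ gradφ : EuclideanSpace ℝ (Fin d) → EuclideanSpace ℂ (Fin d),
        (∀ x, gradφ x = fun j =>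
          a * (Complex.I / 2 * (ξ₀ j : ℂ)) * ep x
            + b * (-(Complex.I / 2) * (ξ₀ j : ℂ)) * em x) →
        (∫ x in Ω, ‖gradφ x‖ ^ 2) = ‖ξ₀‖ ^ 2 / 4 * ∫ x in Ω, ‖φ x‖ ^ 2) := by
  have hfin : volume Ω ≠ ⊤ := hbdd.measure_lt_top.ne
  have hep_meas : AEStronglyMeasurable ep (volume.restrict Ω) := by
    rw [funext hep]; fun_prop
  have hem_meas : AEStronglyMeasurable em (volume.restrict Ω) := by
    rw [funext hem]; fun_prop
  have hep_norm : ∀ x, ‖ep x‖ = 1 := fun x => by simp [hep, Complex.norm_exp]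
  have hem_norm : ∀ x, ‖em x‖ = 1 := fun x => by simp [hem, Complex.norm_exp]
  have horth : ∫ x in Ω, ep x * conj (em x) = 0 := by
    simpa only [hep, hem, exp_I_mul_half_mul_conj_exp_neg] using hzero
  refine ⟨fun a b hab => eq_zero_of_forall_mem_mul_add_mul_eq_zero hfin hpos.ne' hep_meas
    hem_meas hep_norm hem_norm horth hab, fun a b φ hφ gradφ hgrad => ?_⟩
  have hgrad_norm : ∀ x, ‖gradφ x‖ ^ 2 = ‖ξ₀‖ ^ 2 / 4 * ‖a * ep x + -b * em x‖ ^ 2 := by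
    intro x
    rw [EuclideanSpace.norm_of_forall_apply_eq_ofReal_mul (z := I / 2 * (a * ep x + -b * em x))
      fun j => by rw [congrFun (hgrad x) j]; ring]
    simp only [norm_mul, norm_div, norm_I, RCLike.norm_ofNat]
    ring
  simp_rw [hgrad_norm, hφ]
  have hL2 := setIntegral_norm_mul_add_mul_sq_of_orthogonal hfin hep_meas hem_meas hep_norm
    hem_norm horth
  rw [integral_const_mul, hL2, hL2, norm_neg]

theorem stmt_6 (d : ℕ) (Ω : Set (EuclideanSpace ℝ (Fin d)))
    (hopen : IsOpen Ω) (hbdd : Bornology.IsBounded Ω)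
    (hpos : 0 < volume Ω)
    (ξ₀ : EuclideanSpace ℝ (Fin d)) (hξ₀ : ξ₀ ≠ 0)
    (ep em : EuclideanSpace ℝ (Fin d) → ℂ)
    (hep : ∀ x, ep x = Complex.exp (Complex.I * ((⟪ξ₀, x⟫ : ℝ) / 2)))
    (hem : ∀ x, em x = Complex.exp (-(Complex.I * ((⟪ξ₀, x⟫ : ℝ) / 2))))
    (hzero : ∫ x in Ω, Complex.exp (Complex.I * (⟪ξ₀, x⟫ : ℝ)) = 0) :
    (∀ a b : ℂ, (∀ x ∈ Ω, a * ep x + b * em x = 0) → a = 0 ∧ b = 0) ∧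
      (∀ a b : ℂ, ∀ φ : EuclideanSpace ℝ (Fin d) → ℂ,
        (∀ x, φ x = a * ep x + b * em x) →
        ∀ gradφ : EuclideanSpace ℝ (Fin d) → EuclideanSpace ℂ (Fin d),
        (∀ x, gradφ x = fun j =>
          a * (Complex.I / 2 * (ξ₀ j : ℂ)) * ep x
            + b * (-(Complex.I / 2) * (ξ₀ j : ℂ)) * em x) →
        (∫ x in Ω, ‖gradφ x‖ ^ 2) = ‖ξ₀‖ ^ 2 / 4 * ∫ x in Ω, ‖φ x‖ ^ 2) :=
  stmt_6_general d Ω hbdd hpos ξ₀ ep em hep hem hzero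
end

section
/- Let F:ℝ→ℝ be continuous, 2π-periodic, with ∫₀^{2π} F(θ)dθ = 0. Define T(φ) = ∫₀^π F(θ+φ)sin(2θ)dθ and Q(φ) = ∫₀^π F(θ+φ)cos(2θ)dθ. Then there exists φ ∈ ℝ such that T(φ) = 0 and Q(φ) ≥ 0. -/
/-!
Write `T φ = ∫₀^π F(θ+φ) sin 2θ dθ` and `Q φ = ∫₀^π F(θ+φ) cos 2θ dθ`. The substitution
`u = θ + φ` expresses `T` and `Q` through `A φ = ∫_φ^{φ+π} F u sin 2u du` and
`B φ = ∫_φ^{φ+π} F u cos 2u du`, which the fundamental theorem of calculus differentiates; this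
gives `T' = -2 Q` and `Q' = 2 T + F(φ+π) - F φ`. Integrating the second identity over a period
shows that the `2π`-periodic function `T` has mean zero, hence a zero. If `T` is positive
somewhere, the first zero after that point has `T' ≤ 0`, i.e. `Q ≥ 0`; otherwise every zero of
`T` is a maximum, where `Q = 0`.
-/

open Real intervalIntegral Function Set

theorem exists_zero_deriv_nonpos_of_pos_of_nonpos {f f' : ℝ → ℝ}
    (hf : ∀ x, HasDerivAt f (f' x) x) {a b : ℝ} (hab : a ≤ b) (ha : 0 < f a) (hb : f b ≤ 0) :
    ∃ c, f c = 0 ∧ f' c ≤ 0 := by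
  have hcont : Continuous f := Differentiable.continuous fun x => (hf x).differentiableAt
  set S := Icc a b ∩ {x | f x ≤ 0}
  have hSbdd : BddBelow S := ⟨a, fun x hx => hx.1.1⟩
  have hcS : sInf S ∈ S :=
    (isClosed_Icc.inter (isClosed_le hcont continuous_const)).csInf_mem
      ⟨b, ⟨hab, le_rfl⟩, hb⟩ hSbdd
  set c := sInf S -- the first point of `[a, b]` where `f` is no longer positive
  have hpos : ∀ x ∈ Ico a c, 0 < f x := fun x hx =>
    not_le.1 fun hx0 => hx.2.not_ge (csInf_le hSbdd ⟨⟨hx.1, hx.2.le.trans hcS.1.2⟩, hx0⟩)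
  have hfc : f c = 0 := by
    obtain ⟨x, hx, hfx⟩ := intermediate_value_Icc' hcS.1.1 hcont.continuousOn ⟨hcS.2, ha.le⟩
    have hcx : c ≤ x := csInf_le hSbdd ⟨⟨hx.1, hx.2.trans hcS.1.2⟩, hfx.le⟩
    rwa [le_antisymm hx.2 hcx] at hfx
  have hac : a < c := lt_of_le_of_ne hcS.1.1 fun h => by rw [← h] at hfc; linarith
  have hmin : IsMinOn f (Icc a c) c := fun x hx => by
    rcases hx.2.lt_or_eq with h | rfl
    · change f c ≤ f x
      rw [hfc]; exact (hpos x ⟨hx.1, h⟩).le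
    · exact le_refl (f c)
  have hdir : a - c ∈ posTangentConeAt (Icc a c) c :=
    sub_mem_posTangentConeAt_of_segment_subset (segment_symm ℝ c a ▸ (segment_eq_Icc hac.le).le)
  have hderiv := hmin.localize.hasFDerivWithinAt_nonneg (hf c).hasFDerivAt.hasFDerivWithinAt hdir
  simp only [ContinuousLinearMap.toSpanSingleton_apply, smul_eq_mul] at hderiv
  exact ⟨c, hfc, by nlinarith⟩

theorem Function.Periodic.exists_zero_deriv_nonpos {f f' : ℝ → ℝ} {T : ℝ}
    (hf : ∀ x, HasDerivAt f (f' x) x) (hper : Periodic f T) (hT : 0 < T)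
    (hint : ∫ x in (0:ℝ)..T, f x = 0) : ∃ c, f c = 0 ∧ f' c ≤ 0 := by
  have hcont : Continuous f := Differentiable.continuous fun x => (hf x).differentiableAt
  obtain ⟨z, -, hz⟩ := exists_eq_interval_average hT.ne hcont.continuousOn
  rw [interval_average_eq, hint, smul_zero] at hz
  by_cases hpos : ∃ p, 0 < f p
  · obtain ⟨p, hp⟩ := hpos
    obtain ⟨k, hk⟩ := exists_nat_ge ((p - z) / T)
    have hpk : p ≤ z + k * T := by rw [div_le_iff₀ hT] at hk; linarith
    exact exists_zero_deriv_nonpos_of_pos_of_nonpos hf hpk hp (by rw [hper.nat_mul k z, hz])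
  · push Not at hpos
    have hmax : IsMaxOn f univ z := fun x _ => by
      change f x ≤ f z
      rw [hz]; exact hpos x
    exact ⟨z, hz, ((hmax.isLocalMax Filter.univ_mem).hasDerivAt_eq_zero (hf z)).le⟩

theorem Continuous.hasDerivAt_integral_add_const {g : ℝ → ℝ} (hg : Continuous g) (c x : ℝ) :
    HasDerivAt (fun y => ∫ u in y..y + c, g u) (g (x + c) - g x) x := by
  have hsub : (fun y => ∫ u in y..y + c, g u)
      = fun y => (∫ u in (0:ℝ)..y + c, g u) - ∫ u in (0:ℝ)..y, g u := by
    ext y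
    rw [integral_interval_sub_left (hg.intervalIntegrable _ _) (hg.intervalIntegrable _ _)]
  rw [hsub]
  exact (((hg.integral_hasStrictDerivAt 0 (x + c)).hasDerivAt.comp_add_const x c).sub
    (hg.integral_hasStrictDerivAt 0 x).hasDerivAt)

noncomputable section

variable {F : ℝ → ℝ}

def sinMoment (F : ℝ → ℝ) (φ : ℝ) : ℝ := ∫ u in φ..φ + π, F u * sin (2 * u)

def cosMoment (F : ℝ → ℝ) (φ : ℝ) : ℝ := ∫ u in φ..φ + π, F u * cos (2 * u)

def sinTransform (F : ℝ → ℝ) (φ : ℝ) : ℝ := ∫ θ in (0:ℝ)..π, F (θ + φ) * sin (2 * θ)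

def cosTransform (F : ℝ → ℝ) (φ : ℝ) : ℝ := ∫ θ in (0:ℝ)..π, F (θ + φ) * cos (2 * θ)

theorem hasDerivAt_sinMoment (hF : Continuous F) (x : ℝ) :
    HasDerivAt (sinMoment F) ((F (x + π) - F x) * sin (2 * x)) x := by
  have hg : Continuous fun u => F u * sin (2 * u) := by fun_prop
  refine (hg.hasDerivAt_integral_add_const π x).congr_deriv ?_
  rw [mul_add, sin_add_two_pi, sub_mul]

theorem hasDerivAt_cosMoment (hF : Continuous F) (x : ℝ) :
    HasDerivAt (cosMoment F) ((F (x + π) - F x) * cos (2 * x)) x := by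
  have hg : Continuous fun u => F u * cos (2 * u) := by fun_prop
  refine (hg.hasDerivAt_integral_add_const π x).congr_deriv ?_
  rw [mul_add, cos_add_two_pi, sub_mul]

theorem sinTransform_eq_moments (hF : Continuous F) (φ : ℝ) :
    sinTransform F φ = cos (2 * φ) * sinMoment F φ - sin (2 * φ) * cosMoment F φ := calc
  sinTransform F φ = ∫ u in φ..φ + π, F u * sin (2 * u - 2 * φ) := by
    simpa [sinTransform, mul_add, add_comm φ π] using
      integral_comp_add_right (fun u => F u * sin (2 * u - 2 * φ)) φ (a := 0) (b := π)
  _ = ∫ u in φ..φ + π,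
        (cos (2 * φ) * (F u * sin (2 * u)) - sin (2 * φ) * (F u * cos (2 * u))) := by
    congr 1; ext u; rw [sin_sub]; ring
  _ = _ := by
    rw [integral_sub (Continuous.intervalIntegrable (by fun_prop) _ _)
      (Continuous.intervalIntegrable (by fun_prop) _ _), integral_const_mul, integral_const_mul]
    rfl

theorem cosTransform_eq_moments (hF : Continuous F) (φ : ℝ) :
    cosTransform F φ = sin (2 * φ) * sinMoment F φ + cos (2 * φ) * cosMoment F φ := calc
  cosTransform F φ = ∫ u in φ..φ + π, F u * cos (2 * u - 2 * φ) := by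
    simpa [cosTransform, mul_add, add_comm φ π] using
      integral_comp_add_right (fun u => F u * cos (2 * u - 2 * φ)) φ (a := 0) (b := π)
  _ = ∫ u in φ..φ + π,
        (sin (2 * φ) * (F u * sin (2 * u)) + cos (2 * φ) * (F u * cos (2 * u))) := by
    congr 1; ext u; rw [cos_sub]; ring
  _ = _ := by
    rw [integral_add (Continuous.intervalIntegrable (by fun_prop) _ _)
      (Continuous.intervalIntegrable (by fun_prop) _ _), integral_const_mul, integral_const_mul]
    rfl

theorem hasDerivAt_sinTransform (hF : Continuous F) (x : ℝ) :
    HasDerivAt (sinTransform F) (-2 * cosTransform F x) x := by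
  have h2x := (hasDerivAt_id x).const_mul 2
  have h : HasDerivAt (fun y => cos (2 * y) * sinMoment F y - sin (2 * y) * cosMoment F y)
      _ x := (h2x.cos.mul (hasDerivAt_sinMoment hF x)).sub (h2x.sin.mul (hasDerivAt_cosMoment hF x))
  rw [funext (sinTransform_eq_moments hF), cosTransform_eq_moments hF]
  refine h.congr_deriv ?_
  simp only [id]
  ring

theorem hasDerivAt_cosTransform (hF : Continuous F) (x : ℝ) :
    HasDerivAt (cosTransform F) (2 * sinTransform F x + (F (x + π) - F x)) x := by
  have h2x := (hasDerivAt_id x).const_mul 2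
  have h : HasDerivAt (fun y => sin (2 * y) * sinMoment F y + cos (2 * y) * cosMoment F y)
      _ x := (h2x.sin.mul (hasDerivAt_sinMoment hF x)).add (h2x.cos.mul (hasDerivAt_cosMoment hF x))
  rw [funext (cosTransform_eq_moments hF), sinTransform_eq_moments hF]
  refine h.congr_deriv ?_
  simp only [id]
  linear_combination (F (x + π) - F x) * sin_sq_add_cos_sq (2 * x)

theorem sinTransform_periodic (hper : Periodic F (2 * π)) : Periodic (sinTransform F) (2 * π) :=
  fun φ => by simp only [sinTransform, ← add_assoc, hper _]

theorem cosTransform_periodic (hper : Periodic F (2 * π)) : Periodic (cosTransform F) (2 * π) :=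
  fun φ => by simp only [cosTransform, ← add_assoc, hper _]

theorem integral_sinTransform_eq_zero (hF : Continuous F) (hper : Periodic F (2 * π)) :
    ∫ φ in (0:ℝ)..2 * π, sinTransform F φ = 0 := by
  have hT : Continuous (sinTransform F) :=
    Differentiable.continuous fun x => (hasDerivAt_sinTransform hF x).differentiableAt
  have hshift : ∫ x in (0:ℝ)..2 * π, F (x + π) = ∫ x in (0:ℝ)..2 * π, F x := by
    rw [integral_comp_add_right, zero_add, add_comm (2 * π), hper.intervalIntegral_add_eq π 0,
      zero_add]
  have hQ := integral_eq_sub_of_hasDerivAt (fun x _ => hasDerivAt_cosTransform hF x)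
    (Continuous.intervalIntegrable (by fun_prop) 0 (2 * π))
  rw [integral_add (Continuous.intervalIntegrable (by fun_prop) _ _)
      (Continuous.intervalIntegrable (by fun_prop) _ _),
    integral_sub (Continuous.intervalIntegrable (by fun_prop) _ _)
      (hF.intervalIntegrable _ _),
    hshift, sub_self, add_zero, integral_const_mul, (cosTransform_periodic hper).eq, sub_self] at hQ
  linarith

end

theorem stmt_16_general (F : ℝ → ℝ) (hcont : Continuous F)
    (hper : ∀ θ, F (θ + 2 * π) = F θ) :
    ∃ φ : ℝ,
      (∫ θ in (0:ℝ)..π, F (θ + φ) * Real.sin (2 * θ)) = 0 ∧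
        0 ≤ ∫ θ in (0:ℝ)..π, F (θ + φ) * Real.cos (2 * θ) := by
  obtain ⟨φ, hT, hQ⟩ := (sinTransform_periodic hper).exists_zero_deriv_nonpos
    (hasDerivAt_sinTransform hcont) two_pi_pos (integral_sinTransform_eq_zero hcont hper)
  have hQ' : 0 ≤ cosTransform F φ := by linarith
  exact ⟨φ, hT, hQ'⟩

theorem stmt_16 (F : ℝ → ℝ) (hcont : Continuous F)
    (hper : ∀ θ, F (θ + 2 * π) = F θ)
    (hmean : ∫ θ in (0:ℝ)..(2 * π), F θ = 0) :
    ∃ φ : ℝ,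
      (∫ θ in (0:ℝ)..π, F (θ + φ) * Real.sin (2 * θ)) = 0 ∧
        0 ≤ ∫ θ in (0:ℝ)..π, F (θ + φ) * Real.cos (2 * θ) :=
  stmt_16_general F hcont hper
end
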